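/- The generalized Fourier transform of the call payoff φ(x) = (e^x - e^k)⁺ on x ∈ ℝ, evaluated at a complex frequency ω = ω_r + iω_i with ω_i < -1, is given by ∫_{-∞}^∞ e^{-iωx}(e^x - e^k)⁺ dx = -e^{k - ikω}/(ω² + iω), and the integral converges absolutely. -/

import Mathlib

open Real Complex MeasureTheory Filter Set

lemma cexp_norm_eq (c : ℂ) (x : ℝ) : ‖Complex.exp (c * x)‖ = Real.exp (c.re * x) := by
  rw [Complex.norm_exp]
  congr 1
  simp [Complex.mul_re]

lemma cexp_integrableOn {c : ℂ} (hc : c.re < 0) (k : ℝ) :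
    IntegrableOn (fun x : ℝ => Complex.exp (c * x)) (Set.Ioi k) := by
  have h := exp_neg_integrableOn_Ioi k (neg_pos.mpr hc)
  refine h.mono' ?_ ?_
  · exact (Complex.continuous_exp.comp (continuous_const.mul Complex.continuous_ofReal)).aestronglyMeasurable
  · filter_upwards with x
    rw [cexp_norm_eq]
    simp

lemma cexp_hasDerivAt (c : ℂ) (x : ℝ) :
    HasDerivAt (fun y : ℝ => Complex.exp (c * y)) (c * Complex.exp (c * x)) x := by
  have h1 : HasDerivAt (fun z : ℂ => Complex.exp (c * z)) (c * Complex.exp (c * x)) (x : ℂ) := by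
    simpa [mul_comm] using ((hasDerivAt_id (x : ℂ)).const_mul c).cexp
  exact h1.comp_ofReal

lemma cexp_tendsto_zero {c : ℂ} (hc : c.re < 0) :
    Tendsto (fun x : ℝ => Complex.exp (c * x)) atTop (nhds 0) := by
  rw [tendsto_zero_iff_norm_tendsto_zero]
  simp only [cexp_norm_eq]
  have h : Tendsto (fun x : ℝ => c.re * x) atTop atBot :=
    tendsto_id.const_mul_atTop_of_neg hc
  exact Real.tendsto_exp_atBot.comp h

lemma cexp_integral_Ioi {c : ℂ} (hc : c.re < 0) (k : ℝ) :
    ∫ x in Set.Ioi k, Complex.exp (c * x) = -Complex.exp (c * k) / c := by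
  have hc0 : c ≠ 0 := by
    intro h; rw [h] at hc; simp at hc
  have hderiv : ∀ x ∈ Set.Ici k, HasDerivAt (fun y : ℝ => Complex.exp (c * y) / c)
      (Complex.exp (c * x)) x := by
    intro x _
    have := (cexp_hasDerivAt c x).div_const c
    simpa [mul_div_assoc, mul_div_cancel_left₀ _ hc0] using this
  have htend : Tendsto (fun x : ℝ => Complex.exp (c * x) / c) atTop (nhds 0) := by
    simpa using (cexp_tendsto_zero hc).div_const c
  have := integral_Ioi_of_hasDerivAt_of_tendsto' hderiv (cexp_integrableOn hc k) htend
  rw [this]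
  ring

/-- Generalized Fourier transform of the call payoff: for `ω ∈ ℂ` with `Im ω < -1` and
log-strike `k ∈ ℝ`, the integral `∫ e^{-iωx} (e^x - e^k)⁺ dx` converges absolutely and equals
`-e^{k - ikω}/(ω² + iω)`. -/
theorem call_payoff_fourier (k : ℝ) (ω : ℂ) (hω : ω.im < -1) :
    Integrable (fun x : ℝ =>
        Complex.exp (-Complex.I * ω * x) * (max (Real.exp x - Real.exp k) 0 : ℝ)) ∧
      ∫ x : ℝ, Complex.exp (-Complex.I * ω * x) * (max (Real.exp x - Real.exp k) 0 : ℝ) =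
        -Complex.exp (k - Complex.I * k * ω) / (ω ^ 2 + Complex.I * ω) := by
  set a : ℂ := 1 - Complex.I * ω with ha_def
  set b : ℂ := -Complex.I * ω with hb_def
  have ha_re : a.re < 0 := by
    simp only [ha_def, Complex.sub_re, Complex.one_re, Complex.mul_re, Complex.I_re,
      Complex.I_im]
    linarith
  have hb_re : b.re < 0 := by
    have : b.re = ω.im := by simp [hb_def, Complex.mul_re]
    rw [this]; linarith
  have ha0 : a ≠ 0 := fun h => by rw [h] at ha_re; simp at ha_re
  have hb0 : b ≠ 0 := fun h => by rw [h] at hb_re; simp at hb_re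
  set g : ℝ → ℂ := fun x => Complex.exp (a * x) - Real.exp k * Complex.exp (b * x) with hg
  have hfg : (fun x : ℝ =>
      Complex.exp (-Complex.I * ω * x) * (max (Real.exp x - Real.exp k) 0 : ℝ)) =
      Set.indicator (Set.Ioi k) g := by
    ext x
    by_cases hx : k < x
    · rw [Set.indicator_apply, if_pos (Set.mem_Ioi.mpr hx)]
      have hmax : max (Real.exp x - Real.exp k) 0 = Real.exp x - Real.exp k :=
        max_eq_left (by have := Real.exp_le_exp.mpr hx.le; linarith)
      rw [hmax, hg]
      push_cast [Complex.ofReal_exp]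
      rw [mul_sub, ← Complex.exp_add]
      have hax : -Complex.I * ω * x + x = a * x := by rw [ha_def]; ring
      rw [hax, hb_def]
      ring
    · rw [Set.indicator_apply, if_neg (by simpa using hx)]
      have hmax : max (Real.exp x - Real.exp k) 0 = 0 :=
        max_eq_right (by have := Real.exp_le_exp.mpr (not_lt.mp hx); linarith)
      rw [hmax]
      simp
  have hint : IntegrableOn g (Set.Ioi k) :=
    (cexp_integrableOn ha_re k).sub (((cexp_integrableOn hb_re k).const_mul _))
  constructor
  · rw [hfg]
    rw [integrable_indicator_iff measurableSet_Ioi]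
    exact hint
  · rw [hfg, integral_indicator measurableSet_Ioi]
    have h1 : ∫ x in Set.Ioi k, g x =
        (∫ x in Set.Ioi k, Complex.exp (a * x)) -
          Real.exp k * ∫ x in Set.Ioi k, Complex.exp (b * x) := by
      rw [hg]
      rw [integral_sub (cexp_integrableOn ha_re k) ((cexp_integrableOn hb_re k).const_mul _)]
      rw [integral_const_mul]
    rw [h1, cexp_integral_Ioi ha_re k, cexp_integral_Ioi hb_re k]
    have hab : ω ^ 2 + Complex.I * ω = -(a * b) := by
      rw [ha_def, hb_def]
      linear_combination ω ^ 2 * Complex.I_sq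
    have hd0 : (ω ^ 2 + Complex.I * ω) ≠ 0 := by
      rw [hab]; exact neg_ne_zero.mpr (mul_ne_zero ha0 hb0)
    have hea : Complex.exp (a * k) = Real.exp k * Complex.exp (b * k) := by
      rw [ha_def, hb_def, Complex.ofReal_exp, ← Complex.exp_add]
      congr 1; ring
    have heb : Complex.exp (k - Complex.I * k * ω) = Real.exp k * Complex.exp (b * k) := by
      rw [hb_def, Complex.ofReal_exp, ← Complex.exp_add]
      congr 1; ring
    rw [hea, heb, hab]
    field_simp
    ring
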